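/- Suppose λ ∈ ℝ satisfies λ ≥ (D_k ∗̃ X)[t] for every k < K and t < T̃. Then the zero activation is optimal over the nonnegative orthant: for every z = (z_1,…,z_K) with all entries z_k[t] ≥ 0, one has F(0) ≤ F(z), where F(z) = (1/2)·‖X − Σ_{k<K} z_k ∗ D_k‖₂² + λ·Σ_{k<K} Σ_{t<T̃} z_k[t]. In particular there exists a value λ_max above which the solution of the Z-step subproblem is identically zero. -/

import Mathlib

open Finset

noncomputable section

/-- Convolution `(z ∗ D)[p,t] = Σ_{s+τ=t, s<T̃, τ<L} z[s]·D[p,τ]`. -/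
def conv (Ttil L : ℕ) (z : ℕ → ℝ) (D : ℕ → ℕ → ℝ) (p t : ℕ) : ℝ :=
  ∑ s ∈ range Ttil, ∑ τ ∈ range L, if s + τ = t then z s * D p τ else 0

/-- Correlation `(D ∗̃ α)[t] = Σ_{p<P} Σ_{τ<L} D[p,τ]·α[p,t+τ]`. -/
def corr (P L : ℕ) (D : ℕ → ℕ → ℝ) (α : ℕ → ℕ → ℝ) (t : ℕ) : ℝ :=
  ∑ p ∈ range P, ∑ τ ∈ range L, D p τ * α p (t + τ)

/-- The CSC objective on the nonnegative orthant,
`F(z) = (1/2)·‖X − Σ_k z_k ∗ D_k‖₂² + λ·Σ_k Σ_t z_k[t]` (with `T = T̃ + L − 1`). -/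
def cscObjNonneg (P K L Ttil : ℕ) (X : ℕ → ℕ → ℝ) (D : ℕ → ℕ → ℕ → ℝ) (lam : ℝ)
    (z : ℕ → ℕ → ℝ) : ℝ :=
  (1 / 2) * ∑ p ∈ range P, ∑ t ∈ range (Ttil + L - 1),
      (X p t - ∑ k ∈ range K, conv Ttil L (z k) (D k) p t) ^ 2
    + lam * ∑ k ∈ range K, ∑ t ∈ range Ttil, z k t

/-!
Correlation with `D_k` is the adjoint of convolution with `D_k`, so expanding the square gives
`F(z) - F(0) = ½‖Σ_k z_k ∗ D_k‖² + Σ_k Σ_t z_k[t] · (λ - (D_k ∗̃ X)[t])`,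
and both terms are nonnegative for `z ≥ 0`.
-/

lemma sum_sum_sq_sub_two_mul_le {ι κ : Type*} (s : Finset ι) (u : Finset κ) (x y : ι → κ → ℝ) :
    ∑ i ∈ s, ∑ j ∈ u, x i j ^ 2 - 2 * ∑ i ∈ s, ∑ j ∈ u, x i j * y i j
      ≤ ∑ i ∈ s, ∑ j ∈ u, (x i j - y i j) ^ 2 := by
  simp only [mul_sum, ← sum_sub_distrib]
  gcongr with i _ j _
  nlinarith [sq_nonneg (y i j)]

lemma cscObjNonneg_zero (P K L Ttil : ℕ) (X : ℕ → ℕ → ℝ) (D : ℕ → ℕ → ℕ → ℝ) (lam : ℝ) :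
    cscObjNonneg P K L Ttil X D lam (fun _ _ => 0)
      = (1 / 2) * ∑ p ∈ range P, ∑ t ∈ range (Ttil + L - 1), X p t ^ 2 := by
  simp [cscObjNonneg, conv]

lemma sum_mul_conv_eq_sum_mul_corr (P L Ttil : ℕ) (α : ℕ → ℕ → ℝ) (w : ℕ → ℝ)
    (D : ℕ → ℕ → ℝ) :
    ∑ p ∈ range P, ∑ t ∈ range (Ttil + L - 1), α p t * conv Ttil L w D p t
      = ∑ s ∈ range Ttil, w s * corr P L D α s := by
  have reindex : ∀ p, ∑ t ∈ range (Ttil + L - 1), α p t * conv Ttil L w D p t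
      = ∑ s ∈ range Ttil, ∑ τ ∈ range L, w s * (D p τ * α p (s + τ)) := by
    intro p
    simp only [conv, mul_sum, mul_ite, mul_zero]
    rw [sum_comm]
    refine sum_congr rfl fun s hs => ?_
    rw [sum_comm]
    refine sum_congr rfl fun τ hτ => ?_
    rw [sum_ite_eq, if_pos (by simp only [mem_range] at hs hτ ⊢; omega)]
    ring
  simp only [reindex, corr, mul_sum]
  exact sum_comm

lemma sum_mul_sum_conv_le (P K L Ttil : ℕ) (X : ℕ → ℕ → ℝ) (D : ℕ → ℕ → ℕ → ℝ) (lam : ℝ)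
    (hlam : ∀ k < K, ∀ t < Ttil, corr P L (D k) X t ≤ lam) (z : ℕ → ℕ → ℝ)
    (hz : ∀ k < K, ∀ t < Ttil, 0 ≤ z k t) :
    ∑ p ∈ range P, ∑ t ∈ range (Ttil + L - 1), X p t * ∑ k ∈ range K, conv Ttil L (z k) (D k) p t
      ≤ lam * ∑ k ∈ range K, ∑ t ∈ range Ttil, z k t := by
  have swap : ∑ p ∈ range P, ∑ t ∈ range (Ttil + L - 1),
        X p t * ∑ k ∈ range K, conv Ttil L (z k) (D k) p t
      = ∑ k ∈ range K, ∑ p ∈ range P, ∑ t ∈ range (Ttil + L - 1),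
        X p t * conv Ttil L (z k) (D k) p t := by
    simp only [mul_sum]
    rw [sum_congr rfl fun p _ => sum_comm]
    exact sum_comm
  rw [swap, mul_sum]
  refine sum_le_sum fun k hk => ?_
  rw [sum_mul_conv_eq_sum_mul_corr, mul_sum]
  refine sum_le_sum fun t ht => ?_
  rw [mem_range] at hk ht
  rw [mul_comm lam]
  exact mul_le_mul_of_nonneg_left (hlam k hk t ht) (hz k hk t ht)

theorem zero_optimal_above_lambda_max_general
    (P K L Ttil : ℕ)
    (X : ℕ → ℕ → ℝ) (D : ℕ → ℕ → ℕ → ℝ) (lam : ℝ)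
    (hlam : ∀ k < K, ∀ t < Ttil, corr P L (D k) X t ≤ lam) :
    ∀ z : ℕ → ℕ → ℝ, (∀ k < K, ∀ t < Ttil, 0 ≤ z k t) →
      cscObjNonneg P K L Ttil X D lam (fun _ _ => 0) ≤ cscObjNonneg P K L Ttil X D lam z := by
  intro z hz
  have hcross := sum_mul_sum_conv_le P K L Ttil X D lam hlam z hz
  have hsq := sum_sum_sq_sub_two_mul_le (range P) (range (Ttil + L - 1)) X
    (fun p t => ∑ k ∈ range K, conv Ttil L (z k) (D k) p t)
  rw [cscObjNonneg_zero, cscObjNonneg]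
  linarith

/-- if `λ ≥ (D_k ∗̃ X)[t]` for all `k < K` and `t < T̃`, then the zero activation
is optimal over the nonnegative orthant: `F(0) ≤ F(z)` for every componentwise nonnegative `z`. -/
theorem zero_optimal_above_lambda_max
    (P K L Ttil : ℕ) (hP : 0 < P) (hK : 0 < K) (hL : 0 < L) (hTtil : 0 < Ttil)
    (X : ℕ → ℕ → ℝ) (D : ℕ → ℕ → ℕ → ℝ) (lam : ℝ)
    (hlam : ∀ k < K, ∀ t < Ttil, corr P L (D k) X t ≤ lam) :
    ∀ z : ℕ → ℕ → ℝ, (∀ k < K, ∀ t < Ttil, 0 ≤ z k t) →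
      cscObjNonneg P K L Ttil X D lam (fun _ _ => 0) ≤ cscObjNonneg P K L Ttil X D lam z :=
  zero_optimal_above_lambda_max_general P K L Ttil X D lam hlam
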